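/- arXiv:0711.4508 — 3 statements merged into one kernel-verified Lean document; each statement's English description precedes it below -/
import Mathlib

section
/- Under the hypotheses of the grading proposition, η(Sₙ) = Sₙ₊₁ for all n ∈ ℕ. -/
theorem grading_step {S : Type*} (g : S → ℕ) (η : Set S → Set S)
    (h1 : ∀ i : ℕ, η (g ⁻¹' {i}) ⊆ g ⁻¹' {i + 1})
    (h2 : η Set.univ = ⋃ n : ℕ, η (g ⁻¹' {n}))
    (h3 : (Set.univ : Set S) = g ⁻¹' {0} ∪ η Set.univ) :
    ∀ n : ℕ, η (g ⁻¹' {n}) = g ⁻¹' {n + 1} := by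
  intro n
  apply Set.Subset.antisymm (h1 n)
  intro x hx
  have hxu : x ∈ (Set.univ : Set S) := trivial
  rw [h3] at hxu
  rcases hxu with h0 | hη
  · simp only [Set.mem_preimage, Set.mem_singleton_iff] at hx h0
    omega
  · rw [h2] at hη
    rcases Set.mem_iUnion.mp hη with ⟨m, hm⟩
    have := h1 m hm
    simp only [Set.mem_preimage, Set.mem_singleton_iff] at hx this
    have : m = n := by omega
    subst this
    exact hm
end

section
/- Under the hypotheses of the grading proposition, Sₙ = ηⁿ(S₀) for all n ∈ ℕ. -/
theorem grading_iterate {S : Type*} (g : S → ℕ) (η : Set S → Set S)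
    (h1 : ∀ i : ℕ, η (g ⁻¹' {i}) ⊆ g ⁻¹' {i + 1})
    (h2 : η Set.univ = ⋃ n : ℕ, η (g ⁻¹' {n}))
    (h3 : (Set.univ : Set S) = g ⁻¹' {0} ∪ η Set.univ) :
    ∀ n : ℕ, g ⁻¹' {n} = η^[n] (g ⁻¹' {0}) := by
  intro n
  induction n with
  | zero => simp
  | succ n ih =>
    rw [Function.iterate_succ_apply', ← ih]
    apply Set.Subset.antisymm
    · intro x hx
      have hxu : x ∈ (Set.univ : Set S) := Set.mem_univ x
      rw [h3] at hxu
      rcases hxu with h0 | hη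
      · simp only [Set.mem_preimage, Set.mem_singleton_iff] at hx h0
        omega
      · rw [h2] at hη
        obtain ⟨m, hm⟩ := Set.mem_iUnion.mp hη
        have := h1 m hm
        simp only [Set.mem_preimage, Set.mem_singleton_iff] at hx this
        have : m = n := by omega
        rwa [this] at hm
    · exact h1 n
end

section
/- With the setup of the disjoint-union sum fixed point: if (A, r) ∈ s and (A, r') ∈ s then r = r'; that is, s is the graph of the function A ↦ Σ_{x∈A} a_x on nonempty subsets of X. -/
theorem subset_sum_functional {X : Type*} [Fintype X] (a : X → ℝ)
    (s : Set (Set X × ℝ))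
    (hs : s = {q : Set X × ℝ | (∃ x : X, q = ({x}, a x)) ∨
      ∃ (A : Set X) (r : ℝ) (B : Set X) (r' : ℝ),
        (A, r) ∈ s ∧ (B, r') ∈ s ∧ A ∩ B = ∅ ∧ A ∪ B ≠ ∅ ∧
        q = (A ∪ B, r + r')}) :
    (∀ (A : Set X) (r r' : ℝ), (A, r) ∈ s → (A, r') ∈ s → r = r') ∧
    (∀ (A : Set X) (r : ℝ), (A, r) ∈ s → r = ∑ x ∈ A.toFinite.toFinset, a x) := by
  classical
  have hne : ∀ (A : Set X) (r : ℝ), (A, r) ∈ s → A ≠ ∅ := by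
    intro A r hAr
    rw [hs] at hAr
    rcases hAr with ⟨x, hx⟩ | ⟨A', r1, B, r2, _, _, _, hnemp, heq⟩
    · have : A = {x} := congrArg Prod.fst hx
      simp [this]
    · have : A = A' ∪ B := congrArg Prod.fst heq
      rw [this]; exact hnemp
  have key : ∀ n : ℕ, ∀ (A : Set X) (r : ℝ), A.toFinite.toFinset.card ≤ n →
      (A, r) ∈ s → r = ∑ x ∈ A.toFinite.toFinset, a x := by
    intro n
    induction n with
    | zero =>
      intro A r hcard hAr
      exfalso
      apply hne A r hAr
      have : A.toFinite.toFinset = ∅ := Finset.card_eq_zero.mp (Nat.le_zero.mp hcard)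
      simpa using (Set.Finite.toFinset_eq_empty.mp this)
    | succ n ih =>
      intro A r hcard hAr
      rw [hs] at hAr
      rcases hAr with ⟨x, hx⟩ | ⟨B, r1, C, r2, hB, hC, hdisj, hnemp, heq⟩
      · have hA : A = {x} := congrArg Prod.fst hx
        have hr : r = a x := congrArg Prod.snd hx
        subst hA
        have hfs : ({x} : Set X).toFinite.toFinset = {x} := by
          ext y
          simp only [Set.Finite.mem_toFinset, Finset.mem_singleton]
          exact Set.mem_singleton_iff
        rw [hr, hfs, Finset.sum_singleton]
      · have hA : A = B ∪ C := congrArg Prod.fst heq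
        have hr : r = r1 + r2 := congrArg Prod.snd heq
        have hBne : B ≠ ∅ := hne B r1 hB
        have hCne : C ≠ ∅ := hne C r2 hC
        -- finsets
        have hun : A.toFinite.toFinset = B.toFinite.toFinset ∪ C.toFinite.toFinset := by
          ext y
          simp only [Set.Finite.mem_toFinset, Finset.mem_union, hA]
          exact Set.mem_union y B C
        have hdisj' : Disjoint B.toFinite.toFinset C.toFinite.toFinset := by
          rw [Finset.disjoint_left]
          intro y hy hy'
          have : y ∈ B ∩ C := ⟨by simpa using hy, by simpa using hy'⟩
          rw [hdisj] at this; exact this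
        have hBsub : B.toFinite.toFinset ⊂ A.toFinite.toFinset := by
          rw [hun]
          constructor
          · exact Finset.subset_union_left
          · intro hsub
            obtain ⟨c, hc⟩ := Set.nonempty_iff_ne_empty.mpr hCne
            have hc' : c ∈ C.toFinite.toFinset := by simpa using hc
            have : c ∈ B.toFinite.toFinset := hsub (Finset.mem_union_right _ hc')
            exact (Finset.disjoint_right.mp hdisj' hc') this
        have hCsub : C.toFinite.toFinset ⊂ A.toFinite.toFinset := by
          rw [hun]
          constructor
          · exact Finset.subset_union_right
          · intro hsub
            obtain ⟨b, hb⟩ := Set.nonempty_iff_ne_empty.mpr hBne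
            have hb' : b ∈ B.toFinite.toFinset := by simpa using hb
            have : b ∈ C.toFinite.toFinset := hsub (Finset.mem_union_left _ hb')
            exact (Finset.disjoint_left.mp hdisj' hb') this
        have h1 : r1 = ∑ x ∈ B.toFinite.toFinset, a x :=
          ih B r1 (Nat.lt_succ_iff.mp (lt_of_lt_of_le (Finset.card_lt_card hBsub) hcard)) hB
        have h2 : r2 = ∑ x ∈ C.toFinite.toFinset, a x :=
          ih C r2 (Nat.lt_succ_iff.mp (lt_of_lt_of_le (Finset.card_lt_card hCsub) hcard)) hC
        rw [hr, h1, h2, hun, Finset.sum_union hdisj']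
  have key' : ∀ (A : Set X) (r : ℝ), (A, r) ∈ s → r = ∑ x ∈ A.toFinite.toFinset, a x :=
    fun A r => key A.toFinite.toFinset.card A r le_rfl
  exact ⟨fun A r r' h h' => by rw [key' A r h, key' A r' h'], key'⟩
end
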